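/- arXiv:1604.04417 — 7 statements merged into one kernel-verified Lean document; each statement's English description precedes it below -/
import Mathlib

section
/- Let δ be a triple derivation on a C*-algebra A and let e be a partial isometry in A. Then P₀(e)(δ(e)) = 0 and P₂(e)(δ(e)) = −Q(e)(δ(e)). -/
/-!
Since `e = {e,e,e}`, the triple Leibniz rule gives `δe = δe·e*e + ee*·δe + e(δe)*e`. Compressing
this identity by `ee*` on the left and `e*e` on the right, and using `ee*e = e`, `e*ee* = e*`,
yields `P₂(δe) = 2·P₂(δe) + Q(δe)`, i.e. `P₂(δe) = -Q(δe)`; substituting back then gives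
`P₀(δe) = 0`.
-/

variable {A : Type*} [NonUnitalNormedRing A] [StarRing A] [CStarRing A]
  [NormedSpace ℂ A] [IsScalarTower ℂ A A] [SMulCommClass ℂ A A]
  [StarModule ℂ A] [CompleteSpace A]

/-- The triple product `{a,b,c} = (1/2)(a b* c + c b* a)` on a C*-algebra. -/
noncomputable def tp (a b c : A) : A :=
  (2⁻¹ : ℂ) • (a * star b * c + c * star b * a)

/-- A triple derivation: a (complex) linear map satisfying the triple Leibniz rule. -/
def IsTripleDerivation (δ : A → A) : Prop :=
  IsLinearMap ℂ δ ∧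
    ∀ a b c : A, δ (tp a b c) = tp (δ a) b c + tp a (δ b) c + tp a b (δ c)

/-- A weak-local triple derivation: a linear map `T` such that for every continuous
linear functional `φ` and every `a` there is a triple derivation `δ` with `φ (T a) = φ (δ a)`. -/
def IsWeakLocalTripleDerivation (T : A → A) : Prop :=
  IsLinearMap ℂ T ∧
    ∀ (φ : A →L[ℂ] ℂ) (a : A),
      ∃ δ : A → A, IsTripleDerivation δ ∧ φ (T a) = φ (δ a)

section Tripotent

variable {R : Type*} [NonUnitalRing R] [StarRing R] {e x : R}

theorem star_mul_self_mul_star_of_tripotent (he : e * star e * e = e) :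
    star e * e * star e = star e := by
  simpa [star_mul, mul_assoc] using congrArg star he

theorem tripotent_peirce2_eq_neg
    (he : e * star e * e = e) (hx : x = x * star e * e + e * star e * x + e * star x * e) :
    e * star e * x * star e * e = -(e * star x * e) := by
  have he_right : e * (star e * e) = e := by rw [← mul_assoc, he]
  have he_left (y : R) : e * (star e * (e * y)) = e * y := by rw [← mul_assoc, ← mul_assoc, he]
  have hstar (y : R) : star e * (e * (star e * y)) = star e * y := by
    rw [← mul_assoc, ← mul_assoc, star_mul_self_mul_star_of_tripotent he]
  have h : e * star e * x * star e * e =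
      e * star e * x * star e * e + e * star e * x * star e * e + e * star x * e := by
    conv_lhs => rw [hx]
    simp only [mul_add, add_mul, mul_assoc, he_right, he_left, hstar]
  rw [add_assoc, left_eq_add] at h
  exact eq_neg_of_add_eq_zero_left h

theorem tripotent_peirce0_eq_zero
    (he : e * star e * e = e) (hx : x = x * star e * e + e * star e * x + e * star x * e) :
    x - e * star e * x - x * star e * e + e * star e * x * star e * e = 0 := by
  rw [tripotent_peirce2_eq_neg he hx]
  nth_rewrite 1 [hx]
  abel

end Tripotent

section TripleDerivation

variable {B : Type*} [NonUnitalNormedRing B] [StarRing B] [NormedSpace ℂ B] {e : B}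

theorem tp_self_of_tripotent (he : e * star e * e = e) : tp e e e = e := by
  rw [tp, he, ← two_smul ℂ e, smul_smul]
  norm_num

theorem IsTripleDerivation.apply_eq_of_tripotent {δ : B → B} (hδ : IsTripleDerivation δ)
    (he : e * star e * e = e) :
    δ e = δ e * star e * e + e * star e * δ e + e * star (δ e) * e := by
  have h := hδ.2 e e e
  rw [tp_self_of_tripotent he] at h
  refine h.trans ?_
  simp only [tp]
  module

end TripleDerivation

/-- For a triple derivation `δ` and a partial isometry `e`:
`P₀(e)(δ e) = 0` and `P₂(e)(δ e) = -Q(e)(δ e)`. -/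
theorem stmt2 (δ : A → A) (hδ : IsTripleDerivation δ) (e : A)
    (he : e * star e * e = e) :
    δ e - e * star e * δ e - δ e * star e * e + e * star e * δ e * star e * e = 0 ∧
    e * star e * δ e * star e * e = -(e * star (δ e) * e) := by
  have hx := hδ.apply_eq_of_tripotent he
  exact ⟨tripotent_peirce0_eq_zero he hx, tripotent_peirce2_eq_neg he hx⟩
end

section
/- Let T be a weak-local triple derivation on a C*-algebra A and let e be a partial isometry in A. Then P₀(e)(T(e)) = 0, i.e., T(e) − e e* T(e) − T(e) e* e + e e* T(e) e* e = 0. -/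
/-!
Applying the Leibniz rule to `{e,e,e} = e` shows that every triple derivation `δ` satisfies
`δ e = e e* δ(e) + δ(e) e* e + e δ(e)* e`, a sum of elements of the Peirce 2- and 1-spaces of `e`,
all of which are annihilated by `P₀(e)`. As `P₀(e)` is a bounded linear map, `φ ∘ P₀(e)` is a
continuous functional for every continuous functional `φ`, so weak-locality gives
`φ (P₀(e) (T e)) = φ (P₀(e) (δ e)) = 0` for all `φ`, and `P₀(e) (T e) = 0` by Hahn–Banach.
-/

variable {A : Type*} [NonUnitalNormedRing A] [StarRing A] [CStarRing A]
  [NormedSpace ℂ A] [IsScalarTower ℂ A A] [SMulCommClass ℂ A A]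
  [StarModule ℂ A] [CompleteSpace A]

open ContinuousLinearMap

section PeirceZero

variable (𝕜 : Type*) {B : Type*} [NontriviallyNormedField 𝕜] [NonUnitalSeminormedRing B]
  [NormedSpace 𝕜 B] [IsScalarTower 𝕜 B B] [SMulCommClass 𝕜 B B] [Star B]

noncomputable def peirceZero (e : B) : B →L[𝕜] B :=
  .id 𝕜 B - mul 𝕜 B (e * star e) - (mul 𝕜 B).flip (star e * e)
    + mulLeftRight 𝕜 B (e * star e) (star e * e)

theorem peirceZero_apply (e x : B) :
    peirceZero 𝕜 e x = x - e * star e * x - x * star e * e + e * star e * x * star e * e := by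
  simp only [peirceZero, add_apply, sub_apply, id_apply, mul_apply', flip_apply,
    mulLeftRight_apply, mul_assoc]

variable {𝕜} {e : B}

theorem self_mul_star_mul_self_mul_assoc (he : e * star e * e = e) (y : B) :
    e * (star e * (e * y)) = e * y := by
  rw [← mul_assoc, ← mul_assoc, he]

theorem self_mul_star_mul_self_assoc (he : e * star e * e = e) : e * (star e * e) = e := by
  rw [← mul_assoc, he]

theorem peirceZero_self_mul_star_mul (he : e * star e * e = e) (x : B) :
    peirceZero 𝕜 e (e * star e * x) = 0 := by
  simp only [peirceZero_apply, mul_assoc, self_mul_star_mul_self_mul_assoc he]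
  abel

theorem peirceZero_mul_star_mul_self (he : e * star e * e = e) (x : B) :
    peirceZero 𝕜 e (x * star e * e) = 0 := by
  simp only [peirceZero_apply, mul_assoc, self_mul_star_mul_self_assoc he]
  abel

theorem peirceZero_self_mul_mul_self (he : e * star e * e = e) (x : B) :
    peirceZero 𝕜 e (e * x * e) = 0 := by
  simp only [peirceZero_apply, mul_assoc, self_mul_star_mul_self_mul_assoc he,
    self_mul_star_mul_self_assoc he]
  abel

end PeirceZero

section TripleDerivation

variable {B : Type*} [NonUnitalNormedRing B] [StarRing B] [NormedSpace ℂ B]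

theorem tp_self_of_mul_star_mul_self {e : B} (he : e * star e * e = e) : tp e e e = e := by
  rw [tp, he, ← two_smul ℂ e, smul_smul]
  norm_num

theorem IsTripleDerivation.apply_eq_of_mul_star_mul_self {δ : B → B} (hδ : IsTripleDerivation δ)
    {e : B} (he : e * star e * e = e) :
    δ e = e * star e * δ e + δ e * star e * e + e * star (δ e) * e := by
  conv_lhs => rw [← tp_self_of_mul_star_mul_self he, hδ.2, tp, tp, tp]
  module

theorem IsTripleDerivation.peirceZero_apply_self [IsScalarTower ℂ B B] [SMulCommClass ℂ B B]
    {δ : B → B} (hδ : IsTripleDerivation δ) {e : B} (he : e * star e * e = e) :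
    peirceZero ℂ e (δ e) = 0 := by
  rw [hδ.apply_eq_of_mul_star_mul_self he, map_add, map_add, peirceZero_self_mul_star_mul he,
    peirceZero_mul_star_mul_self he, peirceZero_self_mul_mul_self he, add_zero, add_zero]

end TripleDerivation

/-- For a weak-local triple derivation `T` and a partial isometry `e`,
`P₀(e)(T e) = 0`. -/
theorem stmt5 (T : A → A) (hT : IsWeakLocalTripleDerivation T)
    (e : A) (he : e * star e * e = e) :
    T e - e * star e * T e - T e * star e * e + e * star e * T e * star e * e = 0 := by
  rw [← peirceZero_apply ℂ]
  refine SeparatingDual.eq_zero_of_forall_dual_eq_zero (R := ℂ) fun φ ↦ ?_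
  obtain ⟨δ, hδ, hφ⟩ := hT.2 (φ.comp (peirceZero ℂ e)) e
  rw [← comp_apply, hφ, comp_apply, hδ.peirceZero_apply_self he, map_zero]
end

section
/- Let T be a weak-local triple derivation on a C*-algebra A and let e be a partial isometry in A. Then T(e) = 2{T(e),e,e} + {e,T(e),e}, i.e., T(e) = T(e) e* e + e e* T(e) + e T(e)* e. -/
variable {A : Type*} [NonUnitalNormedRing A] [StarRing A] [CStarRing A]
  [NormedSpace ℂ A] [IsScalarTower ℂ A A] [SMulCommClass ℂ A A]
  [StarModule ℂ A] [CompleteSpace A]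

/-!
At a tripotent `e`, expanding `δ e = δ {e,e,e}` by the Leibniz rule gives `D (δ e) = 0` for
every triple derivation `δ`, where `D x = x - (x e* e + e e* x + e x* e)` is real-linear.
Given a real functional `g`, the complex functional whose real part is `g ∘ D` agrees on
`T e` with some triple derivation `δ` at `e`, so `g (D (T e)) = g (D (δ e)) = 0`.
Since real functionals separate points, `D (T e) = 0`.
-/

section TripotentDefect

variable {B : Type*} [NonUnitalNormedRing B] [StarRing B] [ContinuousStar B]
  [NormedSpace ℂ B] [IsScalarTower ℂ B B] [SMulCommClass ℂ B B] [StarModule ℂ B]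

/-- Only real-linear, because `x ↦ e x* e` is conjugate-linear over `ℂ`. -/
noncomputable def tripotentDefect (e : B) : B →L[ℝ] B where
  toFun x := x - (x * star e * e + e * star e * x + e * star x * e)
  map_add' x y := by
    simp only [star_add, add_mul, mul_add]
    abel
  map_smul' r x := by
    simp only [RingHom.id_apply, ← Complex.coe_smul, star_smul, Complex.star_def,
      Complex.conj_ofReal, smul_mul_assoc, mul_smul_comm, smul_add, smul_sub]
  cont := by fun_prop

theorem tripotentDefect_apply (e x : B) :
    tripotentDefect e x = x - (x * star e * e + e * star e * x + e * star x * e) :=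
  rfl

end TripotentDefect

set_option linter.unusedSectionVars false in
theorem IsTripleDerivation.tripotentDefect_apply_eq_zero {δ : A → A}
    (hδ : IsTripleDerivation δ) {e : A} (he : e * star e * e = e) :
    tripotentDefect e (δ e) = 0 := by
  have htp : tp e e e = e := by
    rw [tp, he, ← two_smul ℂ, smul_smul]
    norm_num
  have hleibniz := hδ.2 e e e
  rw [htp] at hleibniz
  rw [tripotentDefect_apply, sub_eq_zero]
  conv_lhs => rw [hleibniz]
  simp only [tp]
  module

/-- For a weak-local triple derivation `T` and a partial isometry `e`,
`T e = 2{T e, e, e} + {e, T e, e}`, i.e. `T e = T e e* e + e e* T e + e (T e)* e`. -/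
theorem stmt7 (T : A → A) (hT : IsWeakLocalTripleDerivation T)
    (e : A) (he : e * star e * e = e) :
    T e = T e * star e * e + e * star e * T e + e * star (T e) * e := by
  suffices h : tripotentDefect e (T e) = 0 by rwa [tripotentDefect_apply, sub_eq_zero] at h
  refine SeparatingDual.eq_zero_of_forall_dual_eq_zero (R := ℝ) fun g => ?_
  obtain ⟨δ, hδ, hψ⟩ := hT.2 (StrongDual.extendRCLike (g.comp (tripotentDefect e))) e
  calc g (tripotentDefect e (T e))
      = RCLike.re (StrongDual.extendRCLike (g.comp (tripotentDefect e)) (T e) : ℂ) := by simp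
    _ = g (tripotentDefect e (δ e)) := by rw [hψ]; simp
    _ = 0 := by rw [hδ.tripotentDefect_apply_eq_zero he, map_zero]
end

section
/- Let T : A → A be a linear map on a C*-algebra A such that T(e) = 2{e,e,T(e)} + {e,T(e),e} for every partial isometry e in A. If u and v are orthogonal partial isometries in A (u v* = 0 and v* u = 0), then {v,v,T(u)} + {u,T(v),v} = 0. -/
variable {A : Type*} [NonUnitalNormedRing A] [StarRing A] [CStarRing A]
  [NormedSpace ℂ A] [IsScalarTower ℂ A A] [SMulCommClass ℂ A A]
  [StarModule ℂ A] [CompleteSpace A]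

/-!
For `|c| = 1` the element `u + c • v` is again a partial isometry, so the hypothesis applies to it.
Expanding with the linearity of `T` and the orthogonality of `u` and `v` (which kills every triple
product having `u` and `v` in adjacent slots) leaves `X + c • Y + c̄ • Z + c² • W = 0` with
`X = 2 ({v,v,T u} + {u,T v,v})`, and averaging over `c ∈ {±1, ±i}` isolates `X`.
-/

section StarRing

variable {R : Type*} [NonUnitalRing R] [StarRing R]

def IsTripotent (e : R) : Prop := e * star e * e = e

theorem IsTripotent.add_of_orthogonal {u v : R} (hu : IsTripotent u) (hv : IsTripotent v)
    (huv : u * star v = 0) (hvu : star v * u = 0) : IsTripotent (u + v) := by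
  have hvu' : v * star u = 0 := by simpa using congrArg star huv
  have huv' : star u * v = 0 := by simpa using congrArg star hvu
  unfold IsTripotent at *
  simp only [star_add, mul_add, add_mul, mul_assoc, huv, hvu, hvu', huv', hu, hv, mul_zero,
    add_zero, zero_add]

theorem IsTripotent.smul [Module ℂ R] [IsScalarTower ℂ R R] [SMulCommClass ℂ R R]
    [StarModule ℂ R] {e : R} (he : IsTripotent e) {c : ℂ} (hc : star c * c = 1) :
    IsTripotent (c • e) := by
  unfold IsTripotent at *
  simp only [star_smul, smul_mul_assoc, mul_smul_comm, smul_smul, he]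
  congr 1
  linear_combination c * hc

end StarRing

/-- Average over `c ∈ {±1, ±i}`. -/
theorem eq_zero_of_forall_unimodular {M : Type*} [AddCommGroup M] [Module ℂ M] {a b d f : M}
    (h : ∀ c : ℂ, star c * c = 1 → a + c • b + star c • d + c ^ 2 • f = 0) : a = 0 := by
  have h₁ := h 1 (by simp)
  have h₂ := h (-1) (by simp)
  have h₃ := h Complex.I (by simp [Complex.conj_I])
  have h₄ := h (-Complex.I) (by simp [Complex.conj_I])
  simp only [Complex.star_def, map_neg, map_one, Complex.conj_I, neg_neg, neg_sq, Complex.I_sq,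
    one_pow, one_smul, neg_smul] at h₁ h₂ h₃ h₄
  have h₄a : (4 : ℂ) • a = 0 := by linear_combination (norm := module) h₁ + h₂ + h₃ + h₄
  simpa using h₄a

section TripleProduct

variable {B : Type*} [NonUnitalNormedRing B] [StarRing B] [NormedSpace ℂ B]
  [IsScalarTower ℂ B B] [SMulCommClass ℂ B B] [StarModule ℂ B]

/-- `leibnizDefect e (δ e) = 0` is the triple Leibniz rule for `δ` at `e = {e,e,e}`. -/
noncomputable def leibnizDefect (e w : B) : B :=
  (2 : ℂ) • tp e e w + tp e w e - w

theorem leibnizDefect_add_smul {u v : B} (huv : u * star v = 0) (hvu : star v * u = 0)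
    (x y : B) {c : ℂ} (hc : star c * c = 1) :
    leibnizDefect (u + c • v) (x + c • y) =
      leibnizDefect u x + c • leibnizDefect v y + (2 : ℂ) • (tp v v x + tp u y v)
        + c • (2 : ℂ) • (tp u u y + tp u x v) + star c • tp u y u + c ^ 2 • tp v x v := by
  have hvu' : v * star u = 0 := by simpa using congrArg star huv
  have huv' : star u * v = 0 := by simpa using congrArg star hvu
  simp only [leibnizDefect, tp, star_add, star_smul, smul_add, smul_sub, smul_smul, mul_add,
    add_mul, smul_mul_assoc, mul_smul_comm, mul_assoc, huv, hvu, hvu', huv', mul_zero, smul_zero,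
    add_zero, zero_add]
  match_scalars <;> first | ring1 | linear_combination hc | linear_combination c * hc

end TripleProduct

/-- If a linear map `T` satisfies `T e = 2{e,e,T e} + {e,T e,e}` for every partial
isometry `e`, and `u ⊥ v` are orthogonal partial isometries, then
`{v,v,T u} + {u,T v,v} = 0`. -/
theorem stmt8 (T : A → A) (hlin : IsLinearMap ℂ T)
    (hT : ∀ e : A, e * star e * e = e →
      T e = (2 : ℂ) • tp e e (T e) + tp e (T e) e)
    (u v : A) (hu : u * star u * u = u) (hv : v * star v * v = v)
    (huv : u * star v = 0) (hvu : star v * u = 0) :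
    tp v v (T u) + tp u (T v) v = 0 := by
  have hdefect : ∀ e, IsTripotent e → leibnizDefect e (T e) = 0 := fun e he => by
    rw [leibnizDefect, ← hT e he, sub_self]
  have hexpand : ∀ c : ℂ, star c * c = 1 →
      (2 : ℂ) • (tp v v (T u) + tp u (T v) v) + c • (2 : ℂ) • (tp u u (T v) + tp u (T u) v)
        + star c • tp u (T v) u + c ^ 2 • tp v (T u) v = 0 := by
    intro c hc
    have huv_c : u * star (c • v) = 0 := by rw [star_smul, mul_smul_comm, huv, smul_zero]
    have hvu_c : star (c • v) * u = 0 := by rw [star_smul, smul_mul_assoc, hvu, smul_zero]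
    have h := hdefect _ (IsTripotent.add_of_orthogonal hu (IsTripotent.smul hv hc) huv_c hvu_c)
    rwa [hlin.map_add, hlin.map_smul, leibnizDefect_add_smul huv hvu _ _ hc, hdefect u hu,
      hdefect v hv, smul_zero, add_zero, zero_add] at h
  exact (smul_eq_zero.mp (eq_zero_of_forall_unimodular hexpand)).resolve_left two_ne_zero
end

section
/- Let T : A → A be a linear map on a C*-algebra A such that T(e) = 2{e,e,T(e)} + {e,T(e),e} for every partial isometry e in A. Then T{a,a,a} = 2{T(a),a,a} + {a,T(a),a} for every a ∈ A of the form a = λ₁e₁ + ⋯ + λₙeₙ, where λ₁,…,λₙ are real numbers and e₁,…,eₙ are mutually orthogonal partial isometries in A (eᵢ eⱼ* = 0 and eⱼ* eᵢ = 0 for i ≠ j). -/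
variable {A : Type*} [NonUnitalNormedRing A] [StarRing A] [CStarRing A]
  [NormedSpace ℂ A] [IsScalarTower ℂ A A] [SMulCommClass ℂ A A]
  [StarModule ℂ A] [CompleteSpace A]

/-!
The defect `Δ(x,y,z) = T{x,y,z} - {Tx,y,z} - {x,Ty,z} - {x,y,Tz}` is real trilinear; the
hypothesis says that `Δ(u,u,u) = 0` for every tripotent `u`, and the claim is `Δ(a,a,a) = 0`.
Sums and differences of orthogonal tripotents are tripotents, so polarizing along `e ± f` and
then along `(e + f, g)` shows that the symmetrization of `Δ` vanishes on all triples from a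
family of mutually orthogonal tripotents. Expanding `6 Δ(a,a,a) = (sym Δ)(a,a,a)` trilinearly
for `a = Σ λᵢ eᵢ` then gives zero.
-/

namespace LinearMap

variable {R E F : Type*} [CommSemiring R] [AddCommMonoid E] [Module R E]
  [AddCommMonoid F] [Module R F]

def flip₂₃ (Φ : E →ₗ[R] E →ₗ[R] E →ₗ[R] F) : E →ₗ[R] E →ₗ[R] E →ₗ[R] F :=
  (lflip (R₀ := R)).toLinearMap ∘ₗ Φ

def symm₃ (Φ : E →ₗ[R] E →ₗ[R] E →ₗ[R] F) : E →ₗ[R] E →ₗ[R] E →ₗ[R] F :=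
  Φ + Φ.flip₂₃ + Φ.flip + Φ.flip₂₃.flip + Φ.flip.flip₂₃ + Φ.flip₂₃.flip.flip₂₃

variable (Φ : E →ₗ[R] E →ₗ[R] E →ₗ[R] F) (x y z : E)

@[simp]
theorem symm₃_apply :
    Φ.symm₃ x y z = Φ x y z + Φ x z y + Φ y x z + Φ y z x + Φ z x y + Φ z y x :=
  rfl

theorem symm₃_comm₁₂ : Φ.symm₃ x y z = Φ.symm₃ y x z := by
  simp only [symm₃_apply]; abel

theorem symm₃_comm₂₃ : Φ.symm₃ x y z = Φ.symm₃ x z y := by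
  simp only [symm₃_apply]; abel

theorem symm₃_self : Φ.symm₃ x x x = 6 • Φ x x x := by
  simp only [symm₃_apply]; abel

end LinearMap

section StarRing

variable {R : Type*} [NonUnitalRing R] [StarRing R]

def StarOrthogonal (a b : R) : Prop :=
  a * star b = 0 ∧ star b * a = 0

theorem StarOrthogonal.symm {a b : R} (h : StarOrthogonal a b) : StarOrthogonal b a := by
  constructor
  · simpa using congrArg star h.1
  · simpa using congrArg star h.2

theorem StarOrthogonal.add_left {a b c : R} (ha : StarOrthogonal a c) (hb : StarOrthogonal b c) :
    StarOrthogonal (a + b) c :=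
  ⟨by rw [add_mul, ha.1, hb.1, add_zero], by rw [mul_add, ha.2, hb.2, add_zero]⟩

theorem StarOrthogonal.neg_right {a b : R} (h : StarOrthogonal a b) : StarOrthogonal a (-b) :=
  ⟨by rw [star_neg, mul_neg, h.1, neg_zero], by rw [star_neg, neg_mul, h.2, neg_zero]⟩

theorem IsTripotent.neg {e : R} (he : IsTripotent e) : IsTripotent (-e) := by
  rw [IsTripotent, star_neg, neg_mul_neg, mul_neg, he]

theorem IsTripotent.add {e f : R} (he : IsTripotent e) (hf : IsTripotent f)
    (hef : StarOrthogonal e f) : IsTripotent (e + f) := by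
  have hfe := hef.symm
  calc (e + f) * star (e + f) * (e + f) = (e * star e + f * star f) * (e + f) := by
        rw [star_add, mul_add (e + f), add_mul e f (star e), add_mul e f (star f), hef.1, hfe.1,
          add_zero, zero_add]
    _ = e * star e * e + f * star f * f := by
        rw [mul_add, add_mul, add_mul, mul_assoc e _ f, mul_assoc f _ e, hfe.2, hef.2,
          mul_zero, mul_zero, add_zero, zero_add]
    _ = e + f := by rw [he, hf]

theorem IsTripotent.sub {e f : R} (he : IsTripotent e) (hf : IsTripotent f)
    (hef : StarOrthogonal e f) : IsTripotent (e - f) := by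
  simpa only [sub_eq_add_neg] using he.add hf.neg hef.neg_right

end StarRing

namespace LinearMap

variable {R F : Type*} [NonUnitalRing R] [StarRing R] [Module ℝ R]
  [AddCommGroup F] [Module ℝ F] {Φ : R →ₗ[ℝ] R →ₗ[ℝ] R →ₗ[ℝ] F}

theorem symm₃_self_self_eq_zero (hΦ : ∀ u, IsTripotent u → Φ u u u = 0) {e f : R}
    (he : IsTripotent e) (hf : IsTripotent f) (hef : StarOrthogonal e f) :
    Φ.symm₃ e e f = 0 := by
  have hadd := hΦ _ (he.add hf hef)
  have hsub := hΦ _ (he.sub hf hef)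
  simp only [map_add, map_sub, add_apply, sub_apply] at hadd hsub
  rw [symm₃_apply]
  -- Φ(e+f)³ - Φ(e-f)³ = 2 Φ(f,f,f) + symm₃ Φ e e f
  linear_combination (norm := module) hadd - hsub - (2 : ℝ) • hΦ f hf

theorem symm₃_eq_zero_of_starOrthogonal (hΦ : ∀ u, IsTripotent u → Φ u u u = 0) {e f g : R}
    (he : IsTripotent e) (hf : IsTripotent f) (hg : IsTripotent g)
    (hef : StarOrthogonal e f) (heg : StarOrthogonal e g) (hfg : StarOrthogonal f g) :
    Φ.symm₃ e f g = 0 := by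
  have h := symm₃_self_self_eq_zero hΦ (he.add hf hef) hg (heg.add_left hfg)
  simp only [map_add, add_apply] at h
  rw [symm₃_self_self_eq_zero hΦ he hg heg, symm₃_self_self_eq_zero hΦ hf hg hfg,
    symm₃_comm₁₂ Φ f e] at h
  linear_combination (norm := module) (2⁻¹ : ℝ) • h

theorem symm₃_apply_eq_zero_of_pairwise (hΦ : ∀ u, IsTripotent u → Φ u u u = 0) {ι : Type*}
    {e : ι → R} (he : ∀ i, IsTripotent (e i))
    (horth : Pairwise fun i j => StarOrthogonal (e i) (e j)) (p q r : ι) :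
    Φ.symm₃ (e p) (e q) (e r) = 0 := by
  rcases eq_or_ne p q with rfl | hpq
  · rcases eq_or_ne p r with rfl | hpr
    · rw [symm₃_self, hΦ _ (he p), smul_zero]
    · exact symm₃_self_self_eq_zero hΦ (he p) (he r) (horth hpr)
  rcases eq_or_ne q r with rfl | hqr
  · rw [symm₃_comm₁₂, symm₃_comm₂₃]
    exact symm₃_self_self_eq_zero hΦ (he q) (he p) (horth hpq.symm)
  rcases eq_or_ne p r with rfl | hpr
  · rw [symm₃_comm₂₃]
    exact symm₃_self_self_eq_zero hΦ (he p) (he q) (horth hpq)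
  exact symm₃_eq_zero_of_starOrthogonal hΦ (he p) (he q) (he r) (horth hpq) (horth hpr)
    (horth hqr)

theorem apply_self_sum_smul_eq_zero (hΦ : ∀ u, IsTripotent u → Φ u u u = 0) {ι : Type*}
    [Fintype ι] {e : ι → R} (he : ∀ i, IsTripotent (e i))
    (horth : Pairwise fun i j => StarOrthogonal (e i) (e j)) (c : ι → ℝ) :
    Φ (∑ i, c i • e i) (∑ i, c i • e i) (∑ i, c i • e i) = 0 := by
  have h : Φ.symm₃ (∑ i, c i • e i) (∑ i, c i • e i) (∑ i, c i • e i) = 0 := by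
    simp only [map_sum, map_smul, sum_apply, smul_apply,
      symm₃_apply_eq_zero_of_pairwise hΦ he horth, smul_zero, Finset.sum_const_zero]
  rw [symm₃_self, ← Nat.cast_smul_eq_nsmul ℝ] at h
  exact (smul_eq_zero.mp h).resolve_left (by norm_num)

end LinearMap

section TripleProduct

variable {B : Type*} [NonUnitalNormedRing B] [StarRing B] [NormedSpace ℂ B]

theorem tp_comm (a b c : B) : tp a b c = tp c b a := by
  rw [tp, tp, add_comm]

theorem IsTripotent.tp_self {e : B} (he : IsTripotent e) : tp e e e = e := by
  rw [tp, he, ← two_smul ℂ e, smul_smul]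
  norm_num

variable [IsScalarTower ℂ B B] [SMulCommClass ℂ B B] [StarModule ℂ B]

noncomputable def tpₗ : B →ₗ[ℝ] B →ₗ[ℝ] B →ₗ[ℝ] B :=
  LinearMap.mk₂ ℝ
    (fun x y =>
      { toFun := tp x y
        map_add' := fun z z' => by simp only [tp, mul_add, add_mul, smul_add]; abel
        map_smul' := fun r z => by
          simp only [tp, mul_smul_comm, smul_mul_assoc, RingHom.id_apply]; module })
    (fun x x' y => by
      ext z
      simp only [LinearMap.coe_mk, AddHom.coe_mk, LinearMap.add_apply, tp, mul_add, add_mul,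
        smul_add]
      abel)
    (fun r x y => by
      ext z
      simp only [LinearMap.coe_mk, AddHom.coe_mk, LinearMap.smul_apply, tp, mul_smul_comm,
        smul_mul_assoc]
      module)
    (fun x y y' => by
      ext z
      simp only [LinearMap.coe_mk, AddHom.coe_mk, LinearMap.add_apply, tp, star_add, mul_add,
        add_mul, smul_add]
      abel)
    (fun r x y => by
      ext z
      simp only [LinearMap.coe_mk, AddHom.coe_mk, LinearMap.smul_apply, tp, star_smul,
        star_trivial, mul_smul_comm, smul_mul_assoc]
      module)

noncomputable def tripleDefect (T : B →ₗ[ℝ] B) : B →ₗ[ℝ] B →ₗ[ℝ] B →ₗ[ℝ] B :=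
  tpₗ.compr₂ (LinearMap.llcomp ℝ B B B T) - tpₗ ∘ₗ T - tpₗ.compl₂ T
    - tpₗ.compr₂ (LinearMap.lcomp ℝ B T)

@[simp]
theorem tripleDefect_apply (T : B →ₗ[ℝ] B) (x y z : B) :
    tripleDefect T x y z = T (tp x y z) - tp (T x) y z - tp x (T y) z - tp x y (T z) :=
  rfl

theorem tripleDefect_self_eq_zero_iff (T : B →ₗ[ℝ] B) (x : B) :
    tripleDefect T x x x = 0 ↔ T (tp x x x) = (2 : ℂ) • tp (T x) x x + tp x (T x) x := by
  rw [tripleDefect_apply, tp_comm x x (T x), sub_sub, sub_sub, sub_eq_zero, two_smul,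
    ← add_assoc, add_right_comm _ (tp x (T x) x)]

end TripleProduct

/-- If a linear map `T` satisfies `T e = 2{e,e,T e} + {e,T e,e}` for every partial
isometry `e`, then `T{a,a,a} = 2{T a,a,a} + {a,T a,a}` whenever `a` is a finite real
linear combination of mutually orthogonal partial isometries. -/
theorem stmt9 (T : A → A) (hlin : IsLinearMap ℂ T)
    (hT : ∀ e : A, e * star e * e = e →
      T e = (2 : ℂ) • tp e e (T e) + tp e (T e) e)
    (n : ℕ) (lam : Fin n → ℝ) (e : Fin n → A)
    (he : ∀ i, e i * star (e i) * e i = e i)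
    (horth : ∀ i j, i ≠ j → e i * star (e j) = 0 ∧ star (e j) * e i = 0)
    (a : A) (ha : a = ∑ i, (lam i : ℂ) • e i) :
    T (tp a a a) = (2 : ℂ) • tp (T a) a a + tp a (T a) a := by
  let Tₗ : A →ₗ[ℝ] A := (hlin.mk' T).restrictScalars ℝ
  have hΔ : ∀ u, IsTripotent u → tripleDefect Tₗ u u u = 0 := fun u hu => by
    rw [tripleDefect_self_eq_zero_iff]
    change T (tp u u u) = (2 : ℂ) • tp (T u) u u + tp u (T u) u
    rw [hu.tp_self, tp_comm (T u)]
    exact hT u hu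
  simp only [Complex.coe_smul] at ha
  subst ha
  exact (tripleDefect_self_eq_zero_iff Tₗ _).1
    (LinearMap.apply_self_sum_smul_eq_zero hΔ he horth lam)
end

section
/- Let δ be a triple derivation on a C*-algebra A, let e be a partial isometry in A, and let c ∈ A satisfy e e* c e* e = c. Then P₀(e)(δ(c)) = 0, i.e., δ(c) − e e* δ(c) − δ(c) e* e + e e* δ(c) e* e = 0. -/
variable {A : Type*} [NonUnitalNormedRing A] [StarRing A] [CStarRing A]
  [NormedSpace ℂ A] [IsScalarTower ℂ A A] [SMulCommClass ℂ A A]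
  [StarModule ℂ A] [CompleteSpace A]

/-!
Since `e e*` and `e* e` are idempotent, the Peirce-2 condition on `c` gives `e e* c = c = c e* e`,
hence `c = {e, e, c}`. Applying `δ` to this identity writes `δ c` as
`{δ e, e, c} + {e, δ e, c} + {e, e, δ c}`, and each summand is a sum of terms of the form
`e e* y` or `y e* e`, all of which are killed by `P₀(e)`.
-/

section Peirce

variable {R : Type*} [NonUnitalRing R] [Star R] {e : R}

lemma isIdempotentElem_mul_star (he : e * star e * e = e) : IsIdempotentElem (e * star e) := by
  rw [IsIdempotentElem, ← mul_assoc, he]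

lemma isIdempotentElem_star_mul (he : e * star e * e = e) : IsIdempotentElem (star e * e) := by
  rw [IsIdempotentElem, mul_assoc, ← mul_assoc e, he]

lemma mul_star_mul_eq_self_of_peirce2_left (he : e * star e * e = e) {c : R}
    (hc : e * star e * c * star e * e = c) : e * star e * c = c := by
  rw [← hc, ← mul_assoc (e * star e), ← mul_assoc (e * star e), ← mul_assoc (e * star e),
    (isIdempotentElem_mul_star he).eq]

lemma mul_star_mul_eq_self_of_peirce2_right (he : e * star e * e = e) {c : R}
    (hc : e * star e * c * star e * e = c) : c * star e * e = c := by
  nth_rewrite 1 [← hc]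
  rw [mul_assoc _ (star e) e, mul_assoc _ (star e) e, mul_assoc (e * star e * c),
    (isIdempotentElem_star_mul he).eq, ← mul_assoc, hc]

variable (S : Type*) [CommSemiring S] [Module S R] [IsScalarTower S R R] [SMulCommClass S R R]

/-- `x ↦ (1 - e e*) x (1 - e* e)`, expanded so that no unit is needed. -/
def peirce0 (e : R) : R →ₗ[S] R where
  toFun x := x - e * star e * x - x * star e * e + e * star e * x * star e * e
  map_add' x y := by simp only [mul_add, add_mul]; abel
  map_smul' r x := by simp only [mul_smul_comm, smul_mul_assoc, smul_sub, smul_add, RingHom.id_apply]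

lemma peirce0_apply (x : R) :
    peirce0 S e x = x - e * star e * x - x * star e * e + e * star e * x * star e * e :=
  rfl

lemma peirce0_eq_zero_of_mul_left {y : R} (hy : e * star e * y = y) : peirce0 S e y = 0 := by
  rw [peirce0_apply, hy]; abel

lemma peirce0_eq_zero_of_mul_right {y : R} (hy : y * star e * e = y) : peirce0 S e y = 0 := by
  rw [peirce0_apply, hy, mul_assoc (e * star e) y, mul_assoc (e * star e), hy]; abel

end Peirce

omit [CStarRing A] [StarModule ℂ A] [CompleteSpace A] in
lemma peirce0_tp_eq_zero_of_peirce2 {e y : A} (hl : e * star e * y = y) (hr : y * star e * e = y)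
    (a b : A) : peirce0 ℂ e (tp a b y) = 0 := by
  have h₁ : peirce0 ℂ e (a * star b * y) = 0 :=
    peirce0_eq_zero_of_mul_right ℂ (by simp only [mul_assoc] at hr ⊢; rw [hr])
  have h₂ : peirce0 ℂ e (y * star b * a) = 0 :=
    peirce0_eq_zero_of_mul_left ℂ (by simp only [← mul_assoc] at hl ⊢; rw [hl])
  rw [tp, map_smul, map_add, h₁, h₂, add_zero, smul_zero]

omit [CStarRing A] [StarModule ℂ A] [CompleteSpace A] in
lemma peirce0_tp_self_eq_zero {e : A} (he : e * star e * e = e) (x : A) :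
    peirce0 ℂ e (tp e e x) = 0 := by
  have h₁ : peirce0 ℂ e (e * star e * x) = 0 :=
    peirce0_eq_zero_of_mul_left ℂ (by rw [← mul_assoc, (isIdempotentElem_mul_star he).eq])
  have h₂ : peirce0 ℂ e (x * star e * e) = 0 :=
    peirce0_eq_zero_of_mul_right ℂ <| by
      rw [mul_assoc _ (star e) e, mul_assoc x, mul_assoc x, (isIdempotentElem_star_mul he).eq]
  rw [tp, map_smul, map_add, h₁, h₂, add_zero, smul_zero]

omit [CStarRing A] [IsScalarTower ℂ A A] [SMulCommClass ℂ A A] [StarModule ℂ A]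
  [CompleteSpace A] in
lemma tp_self_eq_of_peirce2 {e c : A} (hl : e * star e * c = c) (hr : c * star e * e = c) :
    tp e e c = c := by
  rw [tp, hl, hr, ← two_smul ℂ c, smul_smul, inv_mul_cancel₀ two_ne_zero, one_smul]

/-- For a triple derivation `δ`, a partial isometry `e`, and `c` with
`e e* c e* e = c` (i.e. `c` lies in the Peirce-2 space of `e`), `P₀(e)(δ c) = 0`. -/
theorem stmt12 (δ : A → A) (hδ : IsTripleDerivation δ) (e c : A)
    (he : e * star e * e = e) (hc : e * star e * c * star e * e = c) :
    δ c - e * star e * δ c - δ c * star e * e + e * star e * δ c * star e * e = 0 := by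
  have hl := mul_star_mul_eq_self_of_peirce2_left he hc
  have hr := mul_star_mul_eq_self_of_peirce2_right he hc
  have hδc : δ c = tp (δ e) e c + tp e (δ e) c + tp e e (δ c) := by
    conv_lhs => rw [← tp_self_eq_of_peirce2 hl hr]
    exact hδ.2 e e c
  rw [← peirce0_apply ℂ, hδc, map_add, map_add, peirce0_tp_eq_zero_of_peirce2 hl hr,
    peirce0_tp_eq_zero_of_peirce2 hl hr, peirce0_tp_self_eq_zero he, add_zero, add_zero]
end

section
/- Let T be a weak-local triple derivation on a C*-algebra A. If a, b, c ∈ A satisfy a b* = 0, b* a = 0, c b* = 0 and b* c = 0 (i.e., a ⊥ b and c ⊥ b), then {a, T(b), c} = 0, i.e., a T(b)* c + c T(b)* a = 0. -/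
variable {A : Type*} [NonUnitalNormedRing A] [StarRing A] [CStarRing A]
  [NormedSpace ℂ A] [IsScalarTower ℂ A A] [SMulCommClass ℂ A A]
  [StarModule ℂ A] [CompleteSpace A]

/-! For fixed `a, c` the map `z ↦ c* z a* + a* z c* = (a z* c + c z* a)*` is a bounded complex-linear
map `A → A`. Composing it with a functional `φ` and using weak-locality of `T` at `b` reduces the
claim to `{a, δ b, c} = 0` for a genuine triple derivation `δ`; that follows by applying `δ` to
`{a, b, c} = 0`, since the other two terms of the Leibniz rule vanish by orthogonality. -/

section

variable {B : Type*} [NonUnitalNormedRing B] [StarRing B] [NormedSpace ℂ B]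

theorem tp_eq_zero_iff (a b c : B) : tp a b c = 0 ↔ a * star b * c + c * star b * a = 0 :=
  smul_eq_zero_iff_right (by norm_num)

theorem tp_eq_zero_of_orthogonal (x : B) {b c : B} (hcb : c * star b = 0)
    (hbc : star b * c = 0) : tp x b c = 0 := by
  rw [tp_eq_zero_iff, mul_assoc x, hbc, hcb, mul_zero, zero_mul, add_zero]

theorem IsTripleDerivation.tp_apply_eq_zero_of_orthogonal {δ : B → B}
    (hδ : IsTripleDerivation δ) {a b c : B} (hab : a * star b = 0) (hba : star b * a = 0)
    (hcb : c * star b = 0) (hbc : star b * c = 0) : tp a (δ b) c = 0 := by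
  have hδ0 : δ 0 = 0 := (hδ.1.mk' δ).map_zero
  have h := hδ.2 a b c
  rwa [tp_eq_zero_of_orthogonal a hcb hbc, hδ0, tp_eq_zero_of_orthogonal _ hcb hbc,
    tp_comm a b (δ c), tp_eq_zero_of_orthogonal _ hab hba, zero_add, add_zero, eq_comm] at h

theorem IsWeakLocalTripleDerivation.map_apply_eq_zero {E : Type*} [NormedAddCommGroup E]
    [NormedSpace ℂ E] {T : B → B} (hT : IsWeakLocalTripleDerivation T) (F : B →L[ℂ] E) (b : B)
    (hF : ∀ δ : B → B, IsTripleDerivation δ → F (δ b) = 0) : F (T b) = 0 := by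
  refine SeparatingDual.eq_zero_of_forall_dual_eq_zero (R := ℂ) fun φ => ?_
  obtain ⟨δ, hδ, hφ⟩ := hT.2 (φ.comp F) b
  simpa [hF δ hδ] using hφ

end

/-- For a weak-local triple derivation `T` on a C*-algebra, if `a ⊥ b` and `c ⊥ b`
then `{a, T b, c} = 0`, i.e. `a (T b)* c + c (T b)* a = 0`. -/
theorem stmt14 (T : A → A) (hT : IsWeakLocalTripleDerivation T) (a b c : A)
    (h1 : a * star b = 0) (h2 : star b * a = 0)
    (h3 : c * star b = 0) (h4 : star b * c = 0) :
    a * star (T b) * c + c * star (T b) * a = 0 := by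
  let F : A →L[ℂ] A := ContinuousLinearMap.mulLeftRight ℂ A (star c) (star a) +
    ContinuousLinearMap.mulLeftRight ℂ A (star a) (star c)
  have hF : ∀ z, F z = star (a * star z * c + c * star z * a) := fun z => by
    simp [F, star_mul, mul_assoc, add_comm]
  have hFT : F (T b) = 0 := hT.map_apply_eq_zero F b fun δ hδ => by
    rw [hF, (tp_eq_zero_iff ..).1 (hδ.tp_apply_eq_zero_of_orthogonal h1 h2 h3 h4), star_zero]
  rwa [hF, star_eq_zero] at hFT
end
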